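/- Let R be a ring and R[X₁,...,X_d] a polynomial ring with its usual Z_{≥0}^d-grading. Let M = ⊕_{m ∈ Z_{≥0}^d} M_m be a graded R[X₁,...,X_d]-module and let a₁,...,a_d ∈ Rˣ. Set Y_i := X_i − a_i. Then (Y₁,...,Y_d) is a regular sequence of endomorphisms of M: for each 1 ≤ j ≤ d, the endomorphism of M / (Y₁M + ... + Y_{j−1}M) induced by Y_j is injective. -/

import Mathlib

/-!
Coarsen the `ℕ^d`-grading of `M` to the `ℕ`-grading by the `j`-th exponent. The submodule
`N = Y₁M + ⋯ + Y_{j-1}M` is graded for it, since `Y_i` with `i ≠ j` has degree `0`, whereas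
`Y_j = X_j - a_j` is the sum of a term of degree `1` and a unit of degree `0`. Hence if
`Y_j x ∈ N`, the degree-`n` component `X_j x_{n-1} - a_j x_n` of `Y_j x` lies in `N` for every
`n`, and induction on `n` gives `x_n ∈ N` for all `n`, so `x ∈ N`.
-/

open DirectSum MvPolynomial

namespace DirectSum

variable {ι M σ : Type*} [DecidableEq ι] [AddCommMonoid M] [SetLike σ M] [AddSubmonoidClass σ M]
  (ℳ : ι → σ) [Decomposition ℳ] (f : ι → ℕ)

/-- The projection onto `⨁_{f i = n} ℳ i`, the `n`-th piece of the coarsening of `ℳ` along `f`. -/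
noncomputable def coarseProj (n : ℕ) : M →+ M :=
  (decomposeAddEquiv ℳ).symm.toAddMonoidHom.comp <|
    (DFinsupp.filterAddMonoidHom (fun i ↦ ℳ i) (f · = n)).comp (decomposeAddEquiv ℳ).toAddMonoidHom

variable {ℳ}

theorem coarseProj_of_mem {i : ι} {z : M} (hz : z ∈ ℳ i) (n : ℕ) :
    coarseProj ℳ f n z = if f i = n then z else 0 := by
  change (decompose ℳ).symm ((decompose ℳ z).filter (f · = n)) = _
  rw [decompose_of_mem ℳ hz, DirectSum.of, DFinsupp.singleAddHom_apply, DFinsupp.filter_single]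
  split_ifs
  · exact decompose_symm_of ℳ _
  · exact decompose_symm_zero ℳ

variable (ℳ) in
theorem exists_sum_coarseProj (z : M) : ∃ s : Finset ℕ, ∑ n ∈ s, coarseProj ℳ f n z = z := by
  classical
  let c : ι → M := fun i ↦ decompose ℳ z i
  have hz : ∑ i ∈ (decompose ℳ z).support, c i = z := sum_support_decompose ℳ z
  refine ⟨(decompose ℳ z).support.image f, ?_⟩
  calc ∑ n ∈ (decompose ℳ z).support.image f, coarseProj ℳ f n z
      = ∑ n ∈ (decompose ℳ z).support.image f,
          ∑ i ∈ (decompose ℳ z).support, if f i = n then c i else 0 := by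
        refine Finset.sum_congr rfl fun n _ ↦ ?_
        conv_lhs => rw [← hz]
        simp only [map_sum, c, coarseProj_of_mem f (SetLike.coe_mem _)]
    _ = ∑ i ∈ (decompose ℳ z).support, c i := by
        rw [Finset.sum_comm]
        exact Finset.sum_congr rfl fun i hi ↦ by
          rw [Finset.sum_ite_eq, if_pos (Finset.mem_image_of_mem f hi)]
    _ = z := hz

theorem coarseProj_add_map {φ : M →+ M} {k : ℕ}
    (hφ : ∀ i, ∀ z ∈ ℳ i, ∃ i', f i' = f i + k ∧ φ z ∈ ℳ i') (n : ℕ) (z : M) :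
    coarseProj ℳ f (n + k) (φ z) = φ (coarseProj ℳ f n z) := by
  induction z using Decomposition.inductionOn ℳ with
  | zero => simp only [map_zero]
  | homogeneous z =>
    obtain ⟨i', hi', hφz⟩ := hφ _ _ z.2
    rw [coarseProj_of_mem f hφz, coarseProj_of_mem f z.2, hi']
    simp only [Nat.add_right_cancel_iff]
    split_ifs <;> simp only [map_zero]
  | add z z' h h' => simp only [map_add, h, h']

theorem coarseProj_map_of_lt {φ : M →+ M} {k : ℕ}
    (hφ : ∀ i, ∀ z ∈ ℳ i, ∃ i', f i' = f i + k ∧ φ z ∈ ℳ i') {n : ℕ} (hn : n < k) (z : M) :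
    coarseProj ℳ f n (φ z) = 0 := by
  induction z using Decomposition.inductionOn ℳ with
  | zero => simp only [map_zero]
  | homogeneous z =>
    obtain ⟨i', hi', hφz⟩ := hφ _ _ z.2
    rw [coarseProj_of_mem f hφz, if_neg (by omega)]
  | add z z' h h' => simp only [map_add, h, h', add_zero]

end DirectSum

theorem Submodule.mem_of_sub_smul_mem_of_proj {A M : Type*} [Ring A] [AddCommGroup M]
    [Module A M] {N : Submodule A M} (π : ℕ → M →+ M) (hπN : ∀ n, ∀ z ∈ N, π n z ∈ N)
    (hπ : ∀ z, ∃ s : Finset ℕ, ∑ n ∈ s, π n z = z) {X u : A} (hu : IsUnit u)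
    (hX_zero : ∀ z, π 0 (X • z) = 0) (hX_succ : ∀ n z, π (n + 1) (X • z) = X • π n z)
    (hu_comm : ∀ n z, π n (u • z) = u • π n z) {x : M} (hx : (X - u) • x ∈ N) : x ∈ N := by
  have hcomp : ∀ n, π n (X • x) - u • π n x ∈ N := fun n ↦ by
    simpa only [sub_smul, map_sub, hu_comm] using hπN n _ hx
  have hπx : ∀ n, π n x ∈ N := by
    intro n
    induction n with
    | zero => simpa only [hX_zero, zero_sub, neg_mem_iff, N.smul_mem_iff_of_isUnit hu] using hcomp 0
    | succ n ih =>
      rw [← N.smul_mem_iff_of_isUnit hu]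
      simpa only [hX_succ, sub_sub_cancel] using N.sub_mem (N.smul_mem X ih) (hcomp (n + 1))
  obtain ⟨s, hs⟩ := hπ x
  exact hs ▸ N.sum_mem fun n _ ↦ hπx n

theorem AddMonoidHom.map_mem_iSup {ι : Sort*} {R M : Type*} [Semiring R] [AddCommMonoid M]
    [Module R M] {N : ι → Submodule R M} (φ : M →+ M) (hφ : ∀ k, ∀ z ∈ N k, φ z ∈ N k) {z : M}
    (hz : z ∈ ⨆ k, N k) : φ z ∈ ⨆ k, N k := by
  refine Submodule.iSup_induction N (motive := fun z ↦ φ z ∈ ⨆ k, N k) hz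
    (fun k z hz ↦ Submodule.mem_iSup_of_mem k (hφ k z hz)) ?_ fun z z' h h' ↦ ?_
  · simp only [map_zero, zero_mem]
  · simpa only [map_add] using add_mem h h'

namespace MvPolynomial

variable {R σ M : Type*} [CommRing R] [AddCommGroup M] [Module (MvPolynomial σ R) M] [Module R M]
  [DecidableEq (σ →₀ ℕ)] {ℳ : (σ →₀ ℕ) → Submodule R M} [Decomposition ℳ] (j : σ)

theorem coarseProj_C_smul [IsScalarTower R (MvPolynomial σ R) M] (r : R) (n : ℕ) (z : M) :
    coarseProj ℳ (· j) n ((C r : MvPolynomial σ R) • z) =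
      (C r : MvPolynomial σ R) • coarseProj ℳ (· j) n z :=
  coarseProj_add_map (φ := DistribSMul.toAddMonoidHom M (C r : MvPolynomial σ R)) (k := 0) _
    (fun m z hz ↦ ⟨m, rfl, by
      rw [DistribSMul.toAddMonoidHom_apply, ← algebraMap_eq, algebraMap_smul]
      exact (ℳ m).smul_mem r hz⟩) n z


theorem coarseProj_add_X_smul {i : σ} (hXi : ∀ m, ∀ z ∈ ℳ m,
      (X i : MvPolynomial σ R) • z ∈ ℳ (m + Finsupp.single i 1)) (n : ℕ) (z : M) :
    coarseProj ℳ (· j) (n + Finsupp.single i 1 j) ((X i : MvPolynomial σ R) • z) =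
      (X i : MvPolynomial σ R) • coarseProj ℳ (· j) n z :=
  coarseProj_add_map (φ := DistribSMul.toAddMonoidHom M (X i : MvPolynomial σ R)) _
    (fun m z hz ↦ ⟨m + Finsupp.single i 1, Finsupp.add_apply .., hXi m z hz⟩) n z

theorem coarseProj_zero_X_smul (hXj : ∀ m, ∀ z ∈ ℳ m,
      (X j : MvPolynomial σ R) • z ∈ ℳ (m + Finsupp.single j 1)) (z : M) :
    coarseProj ℳ (· j) 0 ((X j : MvPolynomial σ R) • z) = 0 :=
  coarseProj_map_of_lt (φ := DistribSMul.toAddMonoidHom M (X j : MvPolynomial σ R)) _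
    (fun m z hz ↦ ⟨m + Finsupp.single j 1, Finsupp.add_apply .., hXj m z hz⟩)
    (by simp only [Finsupp.single_eq_same, Nat.lt_one_iff]) z

theorem coarseProj_X_sub_C_smul_of_ne [IsScalarTower R (MvPolynomial σ R) M] {i : σ}
    (hXi : ∀ m, ∀ z ∈ ℳ m,
      (X i : MvPolynomial σ R) • z ∈ ℳ (m + Finsupp.single i 1)) (hij : i ≠ j) (c : R) (n : ℕ)
    (z : M) :
    coarseProj ℳ (· j) n ((X i - C c : MvPolynomial σ R) • z) =
      (X i - C c : MvPolynomial σ R) • coarseProj ℳ (· j) n z := by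
  have hX := coarseProj_add_X_smul j hXi n z
  rw [Finsupp.single_eq_of_ne' hij, add_zero] at hX
  rw [sub_smul, map_sub, hX, coarseProj_C_smul, sub_smul]

end MvPolynomial

/-- Let `R` be a ring and `R[X₁,...,X_d]` a polynomial ring with its
usual `ℤ_{≥0}^d`-grading.  Let `M = ⊕_{m} M_m` be a graded `R[X₁,...,X_d]`-module and let
`a₁,...,a_d ∈ Rˣ`.  Set `Y_i := X_i − a_i`.  Then `(Y₁,...,Y_d)` is a regular sequence of
endomorphisms of `M`: for each `j`, the endomorphism of `M / (Y₁M + ⋯ + Y_{j−1}M)` induced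
by `Y_j` is injective. -/
theorem stmt_3
    (R : Type) [CommRing R] (d : ℕ)
    (M : Type) [AddCommGroup M] [Module (MvPolynomial (Fin d) R) M]
    (a : Fin d → Rˣ)
    [DecidableEq (Fin d →₀ ℕ)] :
    -- `M` as an `R`-module, by restriction of scalars
    letI : Module R M := Module.compHom M (algebraMap R (MvPolynomial (Fin d) R))
    ∀ (ℳ : (Fin d →₀ ℕ) → Submodule R M),
      -- `M = ⊕_m M_m` is an internal direct sum
      DirectSum.IsInternal ℳ →
      -- the grading is compatible with the standard grading of the polynomial ring
      (∀ (i : Fin d) (m : Fin d →₀ ℕ), ∀ x ∈ ℳ m,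
        (MvPolynomial.X i : MvPolynomial (Fin d) R) • x ∈ ℳ (m + Finsupp.single i 1)) →
      -- the sequence `(Y₁, ..., Y_d)` is regular on `M`
      ∀ (j : Fin d) (x : M),
        (MvPolynomial.X j - MvPolynomial.C ((a j : R)) : MvPolynomial (Fin d) R) • x ∈
            (⨆ i : Fin d, ⨆ _ : i < j,
              LinearMap.range (LinearMap.lsmul (MvPolynomial (Fin d) R) M
                (MvPolynomial.X i - MvPolynomial.C ((a i : R))))) →
        x ∈ (⨆ i : Fin d, ⨆ _ : i < j,
              LinearMap.range (LinearMap.lsmul (MvPolynomial (Fin d) R) M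
                (MvPolynomial.X i - MvPolynomial.C ((a i : R))))) := by
  let _ : Module R M := Module.compHom M (algebraMap R (MvPolynomial (Fin d) R))
  intro ℳ hℳ hX j x hx
  let _ := hℳ.chooseDecomposition
  have : IsScalarTower R (MvPolynomial (Fin d) R) M := .of_algebraMap_smul fun _ _ ↦ rfl
  refine Submodule.mem_of_sub_smul_mem_of_proj (coarseProj ℳ (· j)) ?_ (exists_sum_coarseProj ℳ _)
    ((a j).isUnit.map C) (coarseProj_zero_X_smul j (hX j))
    (fun n z ↦ by simpa only [Finsupp.single_eq_same] using coarseProj_add_X_smul j (hX j) n z)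
    (coarseProj_C_smul j _) hx
  refine fun n z hz ↦ AddMonoidHom.map_mem_iSup _ (fun i z hz ↦ ?_) hz
  refine AddMonoidHom.map_mem_iSup _ (fun hij z hz ↦ ?_) hz
  obtain ⟨y, rfl⟩ := hz
  exact ⟨coarseProj ℳ (· j) n y, (coarseProj_X_sub_C_smul_of_ne j (hX i) hij.ne _ n y).symm⟩
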